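/- arXiv:2307.14610 — 2 statements merged into one kernel-verified Lean document; each statement's English description precedes it below -/
import Mathlib

section
/- Let G be a finite graph with Laplacian L having spectrum 0 = λ₀ < λ₁ ≤ ... ≤ λ_{|G|−1} and orthonormal eigenbasis (φⱼ). Then f belongs to the Paley–Wiener space E_ω(G) = range of the spectral projection 1_{[0,ω]}(L) if and only if for every t > 0 the Bernstein inequality ‖Lᵗ f‖ ≤ ωᵗ ‖f‖ holds. -/
/-!
Expand `f = ∑ cₖ φₖ` in the orthonormal eigenbasis. By Parseval, `‖Lᵗ f‖² = ∑ λₖ^{2t} |cₖ|²` and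
`‖f‖² = ∑ |cₖ|²`, so if `cₖ = 0` whenever `λₖ > ω` the Bernstein inequality holds term by term.
Conversely, a single coefficient with `λₖ > ω` gives `|cₖ|² ≤ (ω / λₖ)^{2t} ‖f‖²` for all `t`,
and the right-hand side tends to `0`.
-/

open Finset

/-- Weighted gradient norm squared: `‖∇f‖² = (1/2) Σ_{u,v} |f(u)−f(v)|² w(u,v)`. -/
noncomputable def gradSq {V : Type*} [Fintype V] (w : V → V → ℝ) (f : V → ℂ) : ℝ :=
  (1 / 2) * ∑ u, ∑ v, ‖f u - f v‖ ^ 2 * w u v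

/-- Weighted graph Laplacian: `(Lf)(v) = Σ_u (f(v) − f(u)) w(v,u)`. -/
noncomputable def lap {V : Type*} [Fintype V] (w : V → V → ℝ) (f : V → ℂ) : V → ℂ :=
  fun v => ∑ u, (f v - f u) * ((w v u : ℝ) : ℂ)

/-- Inner product on `ℓ²(G)`. -/
noncomputable def ip {V : Type*} [Fintype V] (ψ f : V → ℂ) : ℂ :=
  ∑ v, (starRingEnd ℂ) (ψ v) * f v

/-- Squared `ℓ²(G)` norm. -/
noncomputable def nsq {V : Type*} [Fintype V] (f : V → ℂ) : ℝ :=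
  ∑ v, ‖f v‖ ^ 2

/-- The graph with weight `w` is connected. -/
def GraphConnected {V : Type*} [Fintype V] (w : V → V → ℝ) : Prop :=
  ∀ u v : V, Relation.ReflTransGen (fun a b => 0 < w a b) u v

/-- `lam1` is the first (smallest) nonzero eigenvalue of the Laplacian of `(V, w)`. -/
def IsFirstNonzeroEig {V : Type*} [Fintype V] (w : V → V → ℝ) (lam1 : ℝ) : Prop :=
  0 < lam1 ∧
  (∃ φ : V → ℂ, φ ≠ 0 ∧ lap w φ = fun v => (lam1 : ℂ) * φ v) ∧
  ∀ (μ : ℝ) (φ : V → ℂ), φ ≠ 0 → (lap w φ = fun v => (μ : ℂ) * φ v) → μ = 0 ∨ lam1 ≤ μ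

section Euclidean

variable {V : Type*} [Fintype V]

lemma nsq_nonneg (f : V → ℂ) : 0 ≤ nsq f :=
  sum_nonneg fun v _ => by positivity

lemma ip_eq_inner (ψ f : V → ℂ) :
    ip ψ f = inner ℂ (WithLp.toLp 2 ψ : EuclideanSpace ℂ V) (WithLp.toLp 2 f) := by
  simp [ip, PiLp.inner_apply, mul_comm]

lemma nsq_eq_norm_sq (f : V → ℂ) : nsq f = ‖(WithLp.toLp 2 f : EuclideanSpace ℂ V)‖ ^ 2 := by
  simp [nsq, EuclideanSpace.norm_sq_eq]

variable {ι : Type*} [DecidableEq ι] {φ : ι → V → ℂ}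

lemma orthonormal_toLp (hON : ∀ k l, ip (φ k) (φ l) = if k = l then 1 else 0) :
    Orthonormal ℂ fun k => (WithLp.toLp 2 (φ k) : EuclideanSpace ℂ V) :=
  orthonormal_iff_ite.2 fun k l => by rw [← ip_eq_inner, hON]

lemma nsq_sum_mul_of_orthonormal [Fintype ι]
    (hON : ∀ k l, ip (φ k) (φ l) = if k = l then 1 else 0) (a : ι → ℂ) :
    nsq (fun v => ∑ k, a k * φ k v) = ∑ k, ‖a k‖ ^ 2 := by
  have hsum : (WithLp.toLp 2 fun v => ∑ k, a k * φ k v : EuclideanSpace ℂ V) =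
      ∑ k, a k • WithLp.toLp 2 (φ k) := by
    ext v; simp
  rw [nsq_eq_norm_sq, hsum, @norm_sq_eq_re_inner ℂ, (orthonormal_toLp hON).inner_sum]
  simp [RCLike.conj_mul, ← Complex.ofReal_pow]

lemma mem_span_iff_forall_ip_eq_zero [Fintype ι]
    (hON : ∀ k l, ip (φ k) (φ l) = if k = l then 1 else 0)
    (hcomplete : ∀ f : V → ℂ, f = fun v => ∑ k, ip (φ k) f * φ k v) (p : ι → Prop) (f : V → ℂ) :
    f ∈ Submodule.span ℂ {g : V → ℂ | ∃ k, p k ∧ g = φ k} ↔ ∀ k, ¬ p k → ip (φ k) f = 0 := by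
  constructor
  · intro hf k hk
    induction hf using Submodule.span_induction with
    | mem g hg =>
      obtain ⟨l, hl, rfl⟩ := hg
      rw [hON, if_neg]
      rintro rfl
      exact hk hl
    | zero => simp [ip]
    | add g h _ _ hg hh =>
      rw [ip_eq_inner] at hg hh ⊢
      rw [WithLp.toLp_add, inner_add_right, hg, hh, add_zero]
    | smul a g _ hg =>
      rw [ip_eq_inner] at hg ⊢
      rw [WithLp.toLp_smul, inner_smul_right, hg, mul_zero]
  · intro hf
    have hexp : f = ∑ k, ip (φ k) f • φ k := by
      conv_lhs => rw [hcomplete f]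
      ext v; simp
    rw [hexp]
    refine Submodule.sum_mem _ fun k _ => ?_
    by_cases hk : p k
    · exact Submodule.smul_mem _ _ (Submodule.subset_span ⟨k, hk, rfl⟩)
    · simp [hf k hk]

end Euclidean

lemma nonpos_of_forall_pow_mul_le {l ω a S : ℝ} (hω : 0 ≤ ω) (hl : ω < l)
    (h : ∀ m : ℕ, 0 < m → l ^ m * a ≤ ω ^ m * S) : a ≤ 0 := by
  have hl0 : 0 < l := hω.trans_lt hl
  have hlim : Filter.Tendsto (fun m : ℕ => (ω / l) ^ m * S) Filter.atTop (nhds 0) := by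
    simpa using (tendsto_pow_atTop_nhds_zero_of_lt_one (div_nonneg hω hl0.le)
      ((div_lt_one hl0).2 hl)).mul_const S
  refine ge_of_tendsto hlim (Filter.eventually_atTop.2 ⟨1, fun m hm => ?_⟩)
  rw [div_pow, div_mul_eq_mul_div, le_div_iff₀ (pow_pos hl0 m), mul_comm]
  exact h m hm

lemma forall_sum_rpow_mul_le_iff {ι : Type*} [Fintype ι] {lam a : ι → ℝ} (hlam : ∀ k, 0 ≤ lam k)
    (ha : ∀ k, 0 ≤ a k) {ω : ℝ} (hω : 0 ≤ ω) :
    (∀ t : ℝ, 0 < t → ∑ k, lam k ^ t * a k ≤ ω ^ t * ∑ k, a k) ↔ ∀ k, ω < lam k → a k = 0 := by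
  constructor
  · intro h k hk
    refine le_antisymm (nonpos_of_forall_pow_mul_le (S := ∑ j, a j) hω hk fun m hm => ?_) (ha k)
    have hsingle : lam k ^ (m : ℝ) * a k ≤ ∑ j, lam j ^ (m : ℝ) * a j :=
      single_le_sum (f := fun j => lam j ^ (m : ℝ) * a j)
        (fun j _ => mul_nonneg (Real.rpow_nonneg (hlam j) _) (ha j)) (mem_univ k)
    simpa only [Real.rpow_natCast] using hsingle.trans (h m (Nat.cast_pos.2 hm))
  · intro h t ht
    rw [mul_sum]
    refine sum_le_sum fun k _ => ?_
    rcases le_or_gt (lam k) ω with hk | hk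
    · exact mul_le_mul_of_nonneg_right (Real.rpow_le_rpow (hlam k) hk ht.le) (ha k)
    · simp [h k hk]

lemma sqrt_le_rpow_mul_sqrt_iff {x y ω t : ℝ} (hω : 0 ≤ ω) (hy : 0 ≤ y) :
    √x ≤ ω ^ t * √y ↔ x ≤ ω ^ (t * 2) * y := by
  rw [Real.sqrt_le_left (by positivity), mul_pow, Real.sq_sqrt hy, Real.rpow_mul hω,
    Real.rpow_two]

theorem stmt6_general {V : Type*} [Fintype V]
    (n : ℕ)
    (φ : Fin n → V → ℂ) (lam : Fin n → ℝ)
    (hON : ∀ k l, ip (φ k) (φ l) = if k = l then 1 else 0)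
    (hcomplete : ∀ f : V → ℂ, f = fun v => ∑ k, ip (φ k) f * φ k v)
    (hlnn : ∀ k, 0 ≤ lam k)
    (ω : ℝ) (hω : 0 ≤ ω) (f : V → ℂ) :
    f ∈ Submodule.span ℂ {g : V → ℂ | ∃ k, lam k ≤ ω ∧ g = φ k} ↔
      ∀ t : ℝ, 0 < t →
        Real.sqrt (nsq (fun v => ∑ k, ((lam k ^ t : ℝ) : ℂ) * ip (φ k) f * φ k v)) ≤
          ω ^ t * Real.sqrt (nsq f) := by
  have hf : nsq f = ∑ k, ‖ip (φ k) f‖ ^ 2 := by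
    conv_lhs => rw [hcomplete f]
    exact nsq_sum_mul_of_orthonormal hON _
  have hLf (t : ℝ) : nsq (fun v => ∑ k, ((lam k ^ t : ℝ) : ℂ) * ip (φ k) f * φ k v) =
      ∑ k, lam k ^ (t * 2) * ‖ip (φ k) f‖ ^ 2 := by
    rw [nsq_sum_mul_of_orthonormal hON]
    simp [mul_pow, Real.rpow_mul (hlnn _), abs_of_nonneg (Real.rpow_nonneg (hlnn _) _)]
  have hscale (P : ℝ → Prop) : (∀ t : ℝ, 0 < t → P (t * 2)) ↔ ∀ s : ℝ, 0 < s → P s :=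
    ⟨fun h s hs => div_mul_cancel₀ s two_ne_zero ▸ h (s / 2) (by positivity),
      fun h t ht => h _ (by positivity)⟩
  rw [mem_span_iff_forall_ip_eq_zero hON hcomplete]
  simp_rw [sqrt_le_rpow_mul_sqrt_iff hω (nsq_nonneg f), hLf, hf]
  rw [hscale (fun s => ∑ k, lam k ^ s * ‖ip (φ k) f‖ ^ 2 ≤ ω ^ s * ∑ k, ‖ip (φ k) f‖ ^ 2),
    forall_sum_rpow_mul_le_iff hlnn (fun k => by positivity) hω]
  simp [not_le]

/-- Bernstein characterization of Paley–Wiener spaces: `f ∈ E_ω(G)` (the span of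
eigenfunctions with eigenvalue `≤ ω`) iff `‖Lᵗf‖ ≤ ωᵗ‖f‖` for all `t > 0`, where `Lᵗ` is given
by the spectral functional calculus. -/
theorem stmt6 {V : Type*} [Fintype V] (w : V → V → ℝ)
    (hsymm : ∀ u v, w u v = w v u) (hnn : ∀ u v, 0 ≤ w u v) (hdiag : ∀ v, w v v = 0)
    (n : ℕ) (hn : n = Fintype.card V)
    (φ : Fin n → V → ℂ) (lam : Fin n → ℝ)
    (hON : ∀ k l, ip (φ k) (φ l) = if k = l then 1 else 0)
    (hcomplete : ∀ f : V → ℂ, f = fun v => ∑ k, ip (φ k) f * φ k v)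
    (heig : ∀ k, lap w (φ k) = fun v => ((lam k : ℝ) : ℂ) * φ k v)
    (hlnn : ∀ k, 0 ≤ lam k)
    (ω : ℝ) (hω : 0 ≤ ω) (f : V → ℂ) :
    f ∈ Submodule.span ℂ {g : V → ℂ | ∃ k, lam k ≤ ω ∧ g = φ k} ↔
      ∀ t : ℝ, 0 < t →
        Real.sqrt (nsq (fun v => ∑ k, ((lam k ^ t : ℝ) : ℂ) * ip (φ k) f * φ k v)) ≤
          ω ^ t * Real.sqrt (nsq f) :=
  stmt6_general n φ lam hON hcomplete hlnn ω hω f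
end

section
/- With the partition setup {S_j}, functionals ζ_j, and constants Θ_j = ‖ψ_j‖²/(λ_{1,j}|⟨ψ_j, φ_{0,j}⟩|²), define C_Ξ = √(|J| · max_j(|S_j| Θ_j)). Then for every ω > 0 and every f ∈ ℓ²(G) satisfying ‖∇f‖ ≤ √ω ‖f‖_{ℓ²(G)}, one has Σ_{j∈J} Σ_{v∈S_j} |f(v) − ⟨ζ_j, f⟩| ≤ √ω · C_Ξ · Σ_{v∈V(G)} |f(v)|. -/
open Finset

/-- Gradient norm squared of the induced subgraph on the vertex set `S`. -/
noncomputable def gradSqOn {V : Type*} [Fintype V] (w : V → V → ℝ) (S : Finset V)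
    (f : V → ℂ) : ℝ :=
  (1 / 2) * ∑ u ∈ S, ∑ v ∈ S, ‖f u - f v‖ ^ 2 * w u v

/-- Laplacian of the induced subgraph on the vertex set `S`. -/
noncomputable def lapOn {V : Type*} [Fintype V] (w : V → V → ℝ) (S : Finset V)
    (f : V → ℂ) : V → ℂ :=
  fun v => ∑ u ∈ S, (f v - f u) * ((w v u : ℝ) : ℂ)

/-- The induced subgraph on `S` is connected. -/
def GraphConnectedOn {V : Type*} [Fintype V] (w : V → V → ℝ) (S : Finset V) : Prop :=
  ∀ u ∈ S, ∀ v ∈ S, Relation.ReflTransGen (fun a b => a ∈ S ∧ b ∈ S ∧ 0 < w a b) u v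

/-- `lam1` is the first nonzero eigenvalue of the Laplacian of the induced subgraph on `S`. -/
def IsFirstNonzeroEigOn {V : Type*} [Fintype V] (w : V → V → ℝ) (S : Finset V)
    (lam1 : ℝ) : Prop :=
  0 < lam1 ∧
  (∃ φ : V → ℂ, (∀ v ∉ S, φ v = 0) ∧ φ ≠ 0 ∧
      ∀ v ∈ S, lapOn w S φ v = (lam1 : ℂ) * φ v) ∧
  ∀ (μ : ℝ) (φ : V → ℂ), (∀ v ∉ S, φ v = 0) → φ ≠ 0 →
    (∀ v ∈ S, lapOn w S φ v = (μ : ℂ) * φ v) → μ = 0 ∨ lam1 ≤ μ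

/-!
On a block `S`, write `f = m + r` with `m` the mean of `f` over `S`. The Laplacian of the induced
subgraph is a symmetric operator whose kernel consists of the constants (the block is connected),
so expanding `r ⊥ 1` in an eigenbasis gives the Poincaré inequality `λ₁ ‖r‖² ≤ ‖∇_S f‖²`.
Since `⟨ζ, 1_S⟩ = 1`, on `S` we have `f - ⟨ζ, f⟩ = r - ⟨ζ, r⟩`, and as `r ⊥ φ₀` Cauchy–Schwarz
against `ψ - ⟨φ₀, ψ⟩ φ₀` bounds the `ℓ²` norm of this by `‖ψ‖ / |⟨ψ, φ₀⟩| · ‖r‖`. Passing from `ℓ²`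
to `ℓ¹` costs `√|S|` on each block and `√|J|` in the sum over blocks, whose gradients add up to
at most `‖∇f‖²` because the blocks are disjoint; finally `‖f‖₂ ≤ ‖f‖₁`.
-/

open scoped InnerProductSpace

theorem sum_le_sqrt_card_mul_sqrt_sum_sq {α : Type*} (s : Finset α) (f : α → ℝ) :
    ∑ i ∈ s, f i ≤ √(s.card : ℝ) * √(∑ i ∈ s, f i ^ 2) := by
  rw [← Real.sqrt_mul (Nat.cast_nonneg _)]
  exact (le_abs_self _).trans (Real.abs_le_sqrt sq_sum_le_card_mul_sum_sq)

namespace LinearMap.IsSymmetric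

variable {𝕜 E : Type*} [RCLike 𝕜] [NormedAddCommGroup E] [InnerProductSpace 𝕜 E]
  [FiniteDimensional 𝕜 E] {T : E →ₗ[𝕜] E}

theorem re_inner_map_self_eq_sum_eigenvalues (hT : T.IsSymmetric) (x : E) :
    RCLike.re ⟪x, T x⟫_𝕜 = ∑ i, hT.eigenvalues rfl i * ‖⟪hT.eigenvectorBasis rfl i, x⟫_𝕜‖ ^ 2 := by
  rw [← (hT.eigenvectorBasis rfl).sum_inner_mul_inner x (T x), map_sum]
  refine Finset.sum_congr rfl fun i _ => ?_
  rw [← hT, hT.apply_eigenvectorBasis, inner_smul_left, RCLike.conj_ofReal, ← inner_conj_symm,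
    mul_left_comm, RCLike.conj_mul, ← RCLike.ofReal_pow, ← RCLike.ofReal_mul, RCLike.ofReal_re]

theorem mul_norm_sq_le_re_inner_map_self (hT : T.IsSymmetric) {c : ℝ}
    (hc : ∀ μ : ℝ, Module.End.HasEigenvalue T μ → μ = 0 ∨ c ≤ μ) {x : E}
    (hx : ∀ y, T y = 0 → ⟪y, x⟫_𝕜 = 0) :
    c * ‖x‖ ^ 2 ≤ RCLike.re ⟪x, T x⟫_𝕜 := by
  rw [hT.re_inner_map_self_eq_sum_eigenvalues, ← (hT.eigenvectorBasis rfl).sum_sq_norm_inner_right,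
    Finset.mul_sum]
  refine Finset.sum_le_sum fun i _ => ?_
  rcases hc _ (hT.hasEigenvalue_eigenvalues rfl i) with h0 | hle
  · have hker : T (hT.eigenvectorBasis rfl i) = 0 := by
      rw [hT.apply_eigenvectorBasis, h0, RCLike.ofReal_zero, zero_smul]
    simp [hx _ hker]
  · gcongr

end LinearMap.IsSymmetric

section Oblique

variable {𝕜 E : Type*} [RCLike 𝕜] [NormedAddCommGroup E] [InnerProductSpace 𝕜 E]

theorem norm_inner_sq_le_of_inner_eq_zero {e r : E} (he : ‖e‖ = 1) (hr : ⟪e, r⟫_𝕜 = 0) (ψ : E) :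
    ‖⟪ψ, r⟫_𝕜‖ ^ 2 ≤ (‖ψ‖ ^ 2 - ‖⟪e, ψ⟫_𝕜‖ ^ 2) * ‖r‖ ^ 2 := by
  set p := ψ - ⟪e, ψ⟫_𝕜 • e
  have hpr : ⟪p, r⟫_𝕜 = ⟪ψ, r⟫_𝕜 := by simp [p, inner_sub_left, inner_smul_left, hr]
  have hep : ⟪e, p⟫_𝕜 = 0 := by
    simp [p, inner_sub_right, inner_smul_right, inner_self_eq_norm_sq_to_K, he]
  have hψ : ‖ψ‖ ^ 2 = ‖⟪e, ψ⟫_𝕜‖ ^ 2 + ‖p‖ ^ 2 := by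
    have := norm_add_sq_eq_norm_sq_add_norm_sq_of_inner_eq_zero (⟪e, ψ⟫_𝕜 • e) p
      (by rw [inner_smul_left, hep, mul_zero])
    rw [add_sub_cancel] at this
    simpa [norm_smul, he, ← sq] using this
  calc ‖⟪ψ, r⟫_𝕜‖ ^ 2 = ‖⟪p, r⟫_𝕜‖ ^ 2 := by rw [hpr]
    _ ≤ (‖p‖ * ‖r‖) ^ 2 := by gcongr; exact norm_inner_le_norm p r
    _ = (‖ψ‖ ^ 2 - ‖⟪e, ψ⟫_𝕜‖ ^ 2) * ‖r‖ ^ 2 := by rw [hψ]; ring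

theorem norm_sub_div_inner_smul_sq_le {e ψ : E} (he : ‖e‖ = 1) (hψe : ⟪ψ, e⟫_𝕜 ≠ 0) (x : E) :
    ‖x - (⟪ψ, x⟫_𝕜 / ⟪ψ, e⟫_𝕜) • e‖ ^ 2 ≤
      ‖ψ‖ ^ 2 / ‖⟪ψ, e⟫_𝕜‖ ^ 2 * ‖x - ⟪e, x⟫_𝕜 • e‖ ^ 2 := by
  set r := x - ⟪e, x⟫_𝕜 • e
  set s := ⟪ψ, r⟫_𝕜 / ⟪ψ, e⟫_𝕜
  have her : ⟪e, r⟫_𝕜 = 0 := by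
    simp [r, inner_sub_right, inner_smul_right, inner_self_eq_norm_sq_to_K, he]
  have hx : x - (⟪ψ, x⟫_𝕜 / ⟪ψ, e⟫_𝕜) • e = r + (-s) • e := by
    have : ⟪ψ, x⟫_𝕜 = ⟪ψ, r⟫_𝕜 + ⟪e, x⟫_𝕜 * ⟪ψ, e⟫_𝕜 := by
      simp [r, inner_sub_right, inner_smul_right]
    rw [this, add_div, mul_div_cancel_right₀ _ hψe, add_smul]
    simp only [r, s, neg_smul]
    abel
  have hpyth : ‖r + (-s) • e‖ ^ 2 = ‖r‖ ^ 2 + ‖s‖ ^ 2 := by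
    have := norm_add_sq_eq_norm_sq_add_norm_sq_of_inner_eq_zero r ((-s) • e)
      (by rw [inner_smul_right, ← inner_conj_symm, her, map_zero, mul_zero])
    simpa [norm_smul, he, ← sq] using this
  have hI : 0 < ‖⟪ψ, e⟫_𝕜‖ ^ 2 := by positivity
  have hs : ‖s‖ ^ 2 ≤ (‖ψ‖ ^ 2 - ‖⟪ψ, e⟫_𝕜‖ ^ 2) / ‖⟪ψ, e⟫_𝕜‖ ^ 2 * ‖r‖ ^ 2 := by
    rw [norm_div, div_pow, div_mul_eq_mul_div, div_le_div_iff_of_pos_right hI, norm_inner_symm ψ e]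
    exact norm_inner_sq_le_of_inner_eq_zero he her ψ
  rw [hx, hpyth]
  calc ‖r‖ ^ 2 + ‖s‖ ^ 2
      ≤ ‖r‖ ^ 2 + (‖ψ‖ ^ 2 - ‖⟪ψ, e⟫_𝕜‖ ^ 2) / ‖⟪ψ, e⟫_𝕜‖ ^ 2 * ‖r‖ ^ 2 := by gcongr
    _ = ‖ψ‖ ^ 2 / ‖⟪ψ, e⟫_𝕜‖ ^ 2 * ‖r‖ ^ 2 := by field_simp; ring

end Oblique

section WeightedGraph

variable {ι : Type*} [Fintype ι] {w : ι → ι → ℝ}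

theorem ip_lap (hsymm : ∀ u v, w u v = w v u) (x y : ι → ℂ) :
    ip x (lap w y) =
      (1 / 2) * ∑ u, ∑ v, starRingEnd ℂ (x u - x v) * (y u - y v) * (w u v : ℂ) := by
  set A : ι → ι → ℂ := fun u v => starRingEnd ℂ (x u) * (y u - y v) * (w u v : ℂ)
  have hA : ∀ u v, A u v + A v u = starRingEnd ℂ (x u - x v) * (y u - y v) * (w u v : ℂ) := by
    intro u v
    simp only [A, hsymm v u, map_sub]
    ring
  have hip : ip x (lap w y) = ∑ u, ∑ v, A u v := by
    simp only [ip, lap, A, Finset.mul_sum, mul_assoc]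
  simp_rw [← hA, Finset.sum_add_distrib]
  rw [Finset.sum_comm (f := fun u v => A v u), hip]
  ring

theorem ip_lap_self (hsymm : ∀ u v, w u v = w v u) (f : ι → ℂ) :
    ip f (lap w f) = gradSq w f := by
  rw [ip_lap hsymm, gradSq]
  push_cast
  simp only [RCLike.conj_mul]
  rfl

theorem gradSq_nonneg (hnn : ∀ u v, 0 ≤ w u v) (f : ι → ℂ) : 0 ≤ gradSq w f := by
  unfold gradSq
  exact mul_nonneg (by norm_num) (Finset.sum_nonneg fun u _ => Finset.sum_nonneg fun v _ =>
    mul_nonneg (sq_nonneg _) (hnn u v))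

theorem gradSq_sub_const (f : ι → ℂ) (c : ℂ) : gradSq w (fun v => f v - c) = gradSq w f := by
  simp [gradSq]

theorem eq_of_gradSq_eq_zero (hnn : ∀ u v, 0 ≤ w u v) (hconn : GraphConnected w) {f : ι → ℂ}
    (hf : gradSq w f = 0) (u v : ι) : f u = f v := by
  have hterm : ∀ a b, 0 ≤ ‖f a - f b‖ ^ 2 * w a b := fun a b => mul_nonneg (sq_nonneg _) (hnn a b)
  have hzero : ∀ a b, ‖f a - f b‖ ^ 2 * w a b = 0 := by
    have hsum : ∑ a, ∑ b, ‖f a - f b‖ ^ 2 * w a b = 0 := by simpa [gradSq] using hf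
    have hrow := (Fintype.sum_eq_zero_iff_of_nonneg fun a =>
      Finset.sum_nonneg fun b _ => hterm a b).mp hsum
    exact fun a b => congrFun ((Fintype.sum_eq_zero_iff_of_nonneg (hterm a)).mp (congrFun hrow a)) b
  have hedge : ∀ a b, 0 < w a b → f a = f b := by
    intro a b hab
    have := (mul_eq_zero.mp (hzero a b)).resolve_right hab.ne'
    rwa [pow_eq_zero_iff two_ne_zero, norm_eq_zero, sub_eq_zero] at this
  induction hconn u v with
  | refl => rfl
  | tail _ hbc ih => exact ih.trans (hedge _ _ hbc)

theorem inner_toLp_eq_ip (ψ f : ι → ℂ) :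
    ⟪(WithLp.toLp 2 ψ : EuclideanSpace ℂ ι), WithLp.toLp 2 f⟫_ℂ = ip ψ f := by
  simp only [PiLp.inner_apply, RCLike.inner_apply, ip, mul_comm]

theorem norm_toLp_sq_eq_nsq (f : ι → ℂ) : ‖(WithLp.toLp 2 f : EuclideanSpace ℂ ι)‖ ^ 2 = nsq f :=
  EuclideanSpace.norm_sq_eq _

variable (w) in
noncomputable def lapOp : EuclideanSpace ℂ ι →ₗ[ℂ] EuclideanSpace ℂ ι where
  toFun x := WithLp.toLp 2 (lap w x)
  map_add' x y := by
    ext v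
    simp only [lap, PiLp.add_apply, ← Finset.sum_add_distrib]
    exact Finset.sum_congr rfl fun u _ => by ring
  map_smul' c x := by
    ext v
    simp only [lap, PiLp.smul_apply, smul_eq_mul, RingHom.id_apply, Finset.mul_sum]
    exact Finset.sum_congr rfl fun u _ => by ring

theorem lapOp_isSymmetric (hsymm : ∀ u v, w u v = w v u) : (lapOp w).IsSymmetric := by
  have h : ∀ a b : EuclideanSpace ℂ ι, ⟪a, lapOp w b⟫_ℂ = ip a (lap w b) :=
    fun a b => inner_toLp_eq_ip a.ofLp _
  intro x y
  rw [← inner_conj_symm, h, h, ip_lap hsymm, ip_lap hsymm]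
  simp only [map_mul, map_sum, Complex.conj_conj, Complex.conj_ofReal, map_div₀, map_one,
    map_ofNat]
  congr 1
  exact Finset.sum_congr rfl fun u _ => Finset.sum_congr rfl fun v _ => by ring

theorem re_inner_lapOp_self (hsymm : ∀ u v, w u v = w v u) (x : EuclideanSpace ℂ ι) :
    RCLike.re ⟪x, lapOp w x⟫_ℂ = gradSq w x := by
  rw [show ⟪x, lapOp w x⟫_ℂ = ip x (lap w x) from inner_toLp_eq_ip x.ofLp _, ip_lap_self hsymm]
  rfl

theorem exists_lap_eigenvector_of_hasEigenvalue_lapOp {μ : ℝ}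
    (hμ : Module.End.HasEigenvalue (lapOp w) (μ : ℂ)) :
    ∃ φ : ι → ℂ, φ ≠ 0 ∧ lap w φ = fun v => (μ : ℂ) * φ v := by
  obtain ⟨φ, hφ⟩ := hμ.exists_hasEigenvector
  refine ⟨φ.ofLp, fun h => hφ.2 (by ext v; simp [h]), ?_⟩
  exact congrArg WithLp.ofLp (Module.End.mem_eigenspace_iff.mp hφ.1)

theorem mul_norm_sub_sq_le_gradSq (hsymm : ∀ u v, w u v = w v u) (hnn : ∀ u v, 0 ≤ w u v)
    (hconn : GraphConnected w) {lam : ℝ} (hlam : IsFirstNonzeroEig w lam)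
    {e : EuclideanSpace ℂ ι} (he : ‖e‖ = 1) (he_const : ∀ u v, e u = e v)
    (x : EuclideanSpace ℂ ι) :
    lam * ‖x - ⟪e, x⟫_ℂ • e‖ ^ 2 ≤ gradSq w x := by
  obtain ⟨v₀, hv₀⟩ : ∃ v₀, e v₀ ≠ 0 := by
    by_contra! h
    have : e = 0 := by ext v; exact h v
    simp [this] at he
  set r := x - ⟪e, x⟫_ℂ • e
  have her : ⟪e, r⟫_ℂ = 0 := by
    simp [r, inner_self_eq_norm_sq_to_K, he]
  have hker : ∀ a, lapOp w a = 0 → ⟪a, r⟫_ℂ = 0 := by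
    intro a ha
    have hgrad : gradSq w a = 0 := by
      rw [← re_inner_lapOp_self hsymm, ha, inner_zero_right, map_zero]
    have ha : a = (a v₀ / e v₀) • e := by
      ext v
      simp [he_const v v₀, hv₀, eq_of_gradSq_eq_zero hnn hconn hgrad v v₀]
    rw [ha, inner_smul_left, her, mul_zero]
  have hgap : ∀ μ : ℝ, Module.End.HasEigenvalue (lapOp w) (μ : ℂ) → μ = 0 ∨ lam ≤ μ := by
    intro μ hμ
    obtain ⟨φ, hφ, heig⟩ := exists_lap_eigenvector_of_hasEigenvalue_lapOp hμ
    exact hlam.2.2 μ φ hφ heig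
  have hr : (r : ι → ℂ) = fun v => x v - ⟪e, x⟫_ℂ * e v₀ := by
    ext v
    simp [r, he_const v v₀]
  calc lam * ‖r‖ ^ 2 ≤ RCLike.re ⟪r, lapOp w r⟫_ℂ :=
        (lapOp_isSymmetric hsymm).mul_norm_sq_le_re_inner_map_self hgap hker
    _ = gradSq w x := by rw [re_inner_lapOp_self hsymm, hr, gradSq_sub_const]


variable (ι) in
noncomputable def unitConst : ι → ℂ := fun _ => ((1 / √(Fintype.card ι) : ℝ) : ℂ)

theorem nsq_unitConst [Nonempty ι] : nsq (unitConst ι) = 1 := by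
  have hn : (0 : ℝ) < Fintype.card ι := by exact_mod_cast Fintype.card_pos
  simp [nsq, unitConst, Real.sq_sqrt hn.le, hn.ne']

theorem sum_norm_sub_ip_div_le [Nonempty ι] (hsymm : ∀ u v, w u v = w v u)
    (hnn : ∀ u v, 0 ≤ w u v) (hconn : GraphConnected w) {lam : ℝ}
    (hlam : IsFirstNonzeroEig w lam) (ψ f : ι → ℂ) (hnz : ip ψ (unitConst ι) ≠ 0) :
    ∑ v, ‖f v - ip ψ f / ((√(Fintype.card ι) : ℂ) * ip ψ (unitConst ι))‖ ≤
      √(Fintype.card ι * (nsq ψ / (lam * ‖ip ψ (unitConst ι)‖ ^ 2))) * √(gradSq w f) := by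
  have hn : (0 : ℝ) < Fintype.card ι := by exact_mod_cast Fintype.card_pos
  set n : ℝ := (Fintype.card ι : ℝ)
  set I := ip ψ (unitConst ι)
  set e : EuclideanSpace ℂ ι := WithLp.toLp 2 (unitConst ι)
  set x : EuclideanSpace ℂ ι := WithLp.toLp 2 f
  set Ψ : EuclideanSpace ℂ ι := WithLp.toLp 2 ψ
  have he : ‖e‖ = 1 := by
    rw [← pow_eq_one_iff_of_nonneg (norm_nonneg _) two_ne_zero, norm_toLp_sq_eq_nsq, nsq_unitConst]
  have hΨe : ⟪Ψ, e⟫_ℂ = I := inner_toLp_eq_ip _ _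
  set y := x - (⟪Ψ, x⟫_ℂ / ⟪Ψ, e⟫_ℂ) • e
  have hy : ∀ v, y v = f v - ip ψ f / ((√n : ℂ) * I) := by
    intro v
    simp [y, hΨe, x, Ψ, e, inner_toLp_eq_ip, unitConst, n]
    ring
  have hΘ : ‖y‖ ^ 2 ≤ nsq ψ / (lam * ‖I‖ ^ 2) * gradSq w f := by
    have hlam0 := hlam.1
    calc ‖y‖ ^ 2 ≤ ‖Ψ‖ ^ 2 / ‖I‖ ^ 2 * ‖x - ⟪e, x⟫_ℂ • e‖ ^ 2 := by
          rw [← hΨe]; exact norm_sub_div_inner_smul_sq_le he (hΨe ▸ hnz) x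
      _ ≤ ‖Ψ‖ ^ 2 / ‖I‖ ^ 2 * (gradSq w f / lam) := by
          gcongr
          rw [le_div_iff₀ hlam0, mul_comm]
          exact mul_norm_sub_sq_le_gradSq hsymm hnn hconn hlam he (fun _ _ => rfl) x
      _ = nsq ψ / (lam * ‖I‖ ^ 2) * gradSq w f := by
          rw [norm_toLp_sq_eq_nsq]; field_simp
  calc ∑ v, ‖f v - ip ψ f / ((√n : ℂ) * I)‖ = ∑ v, ‖y v‖ := by simp only [hy]
    _ ≤ √n * ‖y‖ := by
        rw [EuclideanSpace.norm_eq]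
        simpa using sum_le_sqrt_card_mul_sqrt_sum_sq Finset.univ fun v => ‖y v‖
    _ ≤ √n * √(nsq ψ / (lam * ‖I‖ ^ 2) * gradSq w f) := by
        gcongr
        exact Real.le_sqrt_of_sq_le hΘ
    _ = √(n * (nsq ψ / (lam * ‖I‖ ^ 2))) * √(gradSq w f) := by
        rw [Real.sqrt_mul hn.le, Real.sqrt_mul' _ (gradSq_nonneg hnn f), mul_assoc]

end WeightedGraph

section Restriction

variable {V : Type*} [Fintype V] {w : V → V → ℝ} {S : Finset V}

theorem ip_restrict {ψ : V → ℂ} (hsupp : ∀ v ∉ S, ψ v = 0) (f : V → ℂ) :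
    ip (fun v : S => ψ v) (fun v : S => f v) = ip ψ f := by
  rw [ip, ip, Finset.sum_coe_sort S fun v => starRingEnd ℂ (ψ v) * f v]
  exact Finset.sum_subset (Finset.subset_univ S) fun v _ hv => by simp [hsupp v hv]

theorem nsq_restrict {ψ : V → ℂ} (hsupp : ∀ v ∉ S, ψ v = 0) :
    nsq (fun v : S => ψ v) = nsq ψ := by
  rw [nsq, nsq, Finset.sum_coe_sort S fun v => ‖ψ v‖ ^ 2]
  exact Finset.sum_subset (Finset.subset_univ S) fun v _ hv => by simp [hsupp v hv]

theorem gradSqOn_eq_gradSq_restrict (f : V → ℂ) :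
    gradSqOn w S f = gradSq (fun u v : S => w u v) (fun v : S => f v) := by
  simp only [gradSqOn, gradSq, ← Finset.sum_coe_sort S]

theorem lap_restrict (φ : V → ℂ) (v : S) :
    lap (fun u v : S => w u v) (fun u : S => φ u) v = lapOn w S φ v :=
  Finset.sum_coe_sort S fun u => (φ v - φ u) * ((w v u : ℝ) : ℂ)

theorem GraphConnectedOn.restrict (hconn : GraphConnectedOn w S) :
    GraphConnected (fun u v : S => w u v) := by
  rintro ⟨u, hu⟩ ⟨v, hv⟩
  induction hconn u hu v hv with
  | refl => rfl
  | tail _ hbc ih => exact (ih hbc.1).tail (b := ⟨_, hbc.1⟩) hbc.2.2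

theorem IsFirstNonzeroEigOn.restrict {lam : ℝ} (h : IsFirstNonzeroEigOn w S lam) :
    IsFirstNonzeroEig (fun u v : S => w u v) lam := by
  classical
  obtain ⟨hpos, ⟨φ, hφS, hφ, heig⟩, hgap⟩ := h
  refine ⟨hpos, ⟨fun v : S => φ v, fun h => hφ ?_, ?_⟩, fun μ φ' hφ' heig' => ?_⟩
  · funext v
    by_cases hv : v ∈ S
    · exact congrFun h ⟨v, hv⟩
    · exact hφS v hv
  · funext v
    rw [lap_restrict, heig v v.2]
  · let g : V → ℂ := fun v => if h : v ∈ S then φ' ⟨v, h⟩ else 0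
    have hg : (fun v : S => g v) = φ' := funext fun v => dif_pos v.2
    refine hgap μ g (fun v hv => dif_neg hv) (fun h => hφ' ?_) fun v hv => ?_
    · rw [← hg, h]
      rfl
    · rw [← lap_restrict g ⟨v, hv⟩, hg, heig']
      simp [g, hv]

theorem sum_norm_sub_ip_div_le_on [DecidableEq V] (hsymm : ∀ u v, w u v = w v u)
    (hnn : ∀ u v, 0 ≤ w u v) (hS : S.Nonempty) (hconn : GraphConnectedOn w S) {lam : ℝ}
    (hlam : IsFirstNonzeroEigOn w S lam) {ψ : V → ℂ} (hsupp : ∀ v ∉ S, ψ v = 0) {φ0 : V → ℂ}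
    (hφ0 : φ0 = fun v => if v ∈ S then ((1 / √S.card : ℝ) : ℂ) else 0) (hnz : ip ψ φ0 ≠ 0)
    (f : V → ℂ) :
    ∑ v ∈ S, ‖f v - ip ψ f / ((√S.card : ℂ) * ip ψ φ0)‖ ≤
      √(S.card * (nsq ψ / (lam * ‖ip ψ φ0‖ ^ 2))) * √(gradSqOn w S f) := by
  have : Nonempty S := hS.to_subtype
  have hφ0S : unitConst S = fun v : S => φ0 v := by
    funext v
    simp [unitConst, hφ0]
  have hblock := sum_norm_sub_ip_div_le (fun u v : S => hsymm u v) (fun u v : S => hnn u v)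
    hconn.restrict hlam.restrict (fun v : S => ψ v) (fun v : S => f v)
    (by rwa [hφ0S, ip_restrict hsupp])
  rwa [hφ0S, ip_restrict hsupp, ip_restrict hsupp, nsq_restrict hsupp, Fintype.card_coe,
    ← gradSqOn_eq_gradSq_restrict, Finset.sum_coe_sort S fun v => ‖f v - _‖] at hblock

theorem gradSqOn_nonneg (hnn : ∀ u v, 0 ≤ w u v) (f : V → ℂ) : 0 ≤ gradSqOn w S f := by
  rw [gradSqOn_eq_gradSq_restrict]
  exact gradSq_nonneg (w := fun u v : S => w u v) (fun u v => hnn u v) _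

theorem sum_gradSqOn_le_gradSq {J : Type*} [Fintype J] (hnn : ∀ u v, 0 ≤ w u v)
    {S : J → Finset V} (hdisj : ∀ i j, i ≠ j → Disjoint (S i) (S j)) (f : V → ℂ) :
    ∑ j, gradSqOn w (S j) f ≤ gradSq w f := by
  classical
  have hterm : ∀ u v, 0 ≤ ‖f u - f v‖ ^ 2 * w u v := fun u v => mul_nonneg (sq_nonneg _) (hnn u v)
  simp only [gradSqOn, gradSq, ← Finset.mul_sum]
  gcongr
  calc ∑ j, ∑ u ∈ S j, ∑ v ∈ S j, ‖f u - f v‖ ^ 2 * w u v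
      ≤ ∑ j, ∑ u ∈ S j, ∑ v, ‖f u - f v‖ ^ 2 * w u v :=
        Finset.sum_le_sum fun j _ => Finset.sum_le_sum fun u _ =>
          Finset.sum_le_sum_of_subset_of_nonneg (Finset.subset_univ _) fun v _ _ => hterm u v
    _ = ∑ u ∈ Finset.univ.biUnion S, ∑ v, ‖f u - f v‖ ^ 2 * w u v :=
        (Finset.sum_biUnion fun i _ j _ hij => hdisj i j hij).symm
    _ ≤ ∑ u, ∑ v, ‖f u - f v‖ ^ 2 * w u v :=
        Finset.sum_le_sum_of_subset_of_nonneg (Finset.subset_univ _) fun u _ _ =>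
          Finset.sum_nonneg fun v _ => hterm u v

end Restriction

theorem sqrt_nsq_le_sum_norm {V : Type*} [Fintype V] (f : V → ℂ) : √(nsq f) ≤ ∑ v, ‖f v‖ :=
  (Real.sqrt_le_left (Finset.sum_nonneg fun _ _ => norm_nonneg _)).mpr
    (Finset.sum_sq_le_sq_sum_of_nonneg fun _ _ => norm_nonneg _)

theorem stmt9_general {V J : Type*} [Fintype V] [DecidableEq V] [Fintype J] [Nonempty J]
    (w : V → V → ℝ)
    (hsymm : ∀ u v, w u v = w v u) (hnn : ∀ u v, 0 ≤ w u v)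
    (S : J → Finset V)
    (hdisj : ∀ i j, i ≠ j → Disjoint (S i) (S j))
    (hconnS : ∀ j, GraphConnectedOn w (S j)) (hcardS : ∀ j, 1 < (S j).card)
    (ψ : J → V → ℂ) (hsupp : ∀ j, ∀ v ∉ S j, ψ j v = 0)
    (φ0 : J → V → ℂ)
    (hφ0 : ∀ j, φ0 j = fun v => if v ∈ S j then ((1 / Real.sqrt ((S j).card) : ℝ) : ℂ) else 0)
    (hnz : ∀ j, ip (ψ j) (φ0 j) ≠ 0)
    (lam1 : J → ℝ) (hlam : ∀ j, IsFirstNonzeroEigOn w (S j) (lam1 j))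
    (CΞ : ℝ)
    (hC : CΞ = Real.sqrt ((Fintype.card J : ℝ) *
      Finset.univ.sup' Finset.univ_nonempty
        (fun j => ((S j).card : ℝ) * (nsq (ψ j) / (lam1 j * ‖ip (ψ j) (φ0 j)‖ ^ 2)))))
    (ω : ℝ)
    (f : V → ℂ) (hf : Real.sqrt (gradSq w f) ≤ Real.sqrt ω * Real.sqrt (nsq f)) :
    ∑ j, ∑ v ∈ S j,
        ‖f v - ip (ψ j) f / ((Real.sqrt ((S j).card) : ℂ) * ip (ψ j) (φ0 j))‖ ≤
      Real.sqrt ω * CΞ * ∑ v, ‖f v‖ := by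
  set Θ := fun j => ((S j).card : ℝ) * (nsq (ψ j) / (lam1 j * ‖ip (ψ j) (φ0 j)‖ ^ 2))
  set M := Finset.univ.sup' Finset.univ_nonempty Θ
  have hblock : ∀ j, ∑ v ∈ S j,
      ‖f v - ip (ψ j) f / ((Real.sqrt ((S j).card) : ℂ) * ip (ψ j) (φ0 j))‖ ≤
        √M * √(gradSqOn w (S j) f) := fun j =>
    (sum_norm_sub_ip_div_le_on hsymm hnn (Finset.card_pos.mp (zero_lt_one.trans (hcardS j)))
      (hconnS j) (hlam j) (hsupp j) (hφ0 j) (hnz j) f).trans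
      (by gcongr; exact Finset.le_sup' Θ (Finset.mem_univ j))
  have hsum : ∑ j, √(gradSqOn w (S j) f) ≤ √(Fintype.card J) * √(gradSq w f) := by
    calc ∑ j, √(gradSqOn w (S j) f) ≤ √(Fintype.card J) * √(∑ j, gradSqOn w (S j) f) := by
          simpa [Real.sq_sqrt (gradSqOn_nonneg hnn f)] using
            sum_le_sqrt_card_mul_sqrt_sum_sq Finset.univ fun j => √(gradSqOn w (S j) f)
      _ ≤ √(Fintype.card J) * √(gradSq w f) := by gcongr; exact sum_gradSqOn_le_gradSq hnn hdisj f
  calc _ ≤ ∑ j, √M * √(gradSqOn w (S j) f) := Finset.sum_le_sum fun j _ => hblock j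
    _ ≤ √M * (√(Fintype.card J) * √(gradSq w f)) := by rw [← Finset.mul_sum]; gcongr
    _ ≤ √M * (√(Fintype.card J) * (√ω * ∑ v, ‖f v‖)) := by
        gcongr
        exact hf.trans (by gcongr; exact sqrt_nsq_le_sum_norm f)
    _ = √ω * CΞ * ∑ v, ‖f v‖ := by rw [hC, Real.sqrt_mul (Nat.cast_nonneg _)]; ring

/-- Theorem 5.1 (`ℓ¹` Poincaré-type inequality): with `C_Ξ = √(|J|·max_j(|S_j|Θ_j))`,
`Θ_j = ‖ψ_j‖²/(λ_{1,j}|⟨ψ_j,φ_{0,j}⟩|²)`, for every `ω > 0` and every `f` with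
`‖∇f‖ ≤ √ω ‖f‖`, one has `Σ_j Σ_{v∈S_j}|f(v) − ⟨ζ_j,f⟩| ≤ √ω · C_Ξ · Σ_v |f(v)|`. -/
theorem stmt9 {V J : Type*} [Fintype V] [DecidableEq V] [Fintype J] [Nonempty J]
    (w : V → V → ℝ)
    (hsymm : ∀ u v, w u v = w v u) (hnn : ∀ u v, 0 ≤ w u v) (hdiag : ∀ v, w v v = 0)
    (hconn : GraphConnected w)
    (S : J → Finset V)
    (hdisj : ∀ i j, i ≠ j → Disjoint (S i) (S j))
    (hcover : ∀ v : V, ∃ j, v ∈ S j)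
    (hconnS : ∀ j, GraphConnectedOn w (S j)) (hcardS : ∀ j, 1 < (S j).card)
    (ψ : J → V → ℂ) (hsupp : ∀ j, ∀ v ∉ S j, ψ j v = 0)
    (φ0 : J → V → ℂ)
    (hφ0 : ∀ j, φ0 j = fun v => if v ∈ S j then ((1 / Real.sqrt ((S j).card) : ℝ) : ℂ) else 0)
    (hnz : ∀ j, ip (ψ j) (φ0 j) ≠ 0)
    (lam1 : J → ℝ) (hlam : ∀ j, IsFirstNonzeroEigOn w (S j) (lam1 j))
    (CΞ : ℝ)
    (hC : CΞ = Real.sqrt ((Fintype.card J : ℝ) *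
      Finset.univ.sup' Finset.univ_nonempty
        (fun j => ((S j).card : ℝ) * (nsq (ψ j) / (lam1 j * ‖ip (ψ j) (φ0 j)‖ ^ 2)))))
    (ω : ℝ) (hω : 0 < ω)
    (f : V → ℂ) (hf : Real.sqrt (gradSq w f) ≤ Real.sqrt ω * Real.sqrt (nsq f)) :
    ∑ j, ∑ v ∈ S j,
        ‖f v - ip (ψ j) f / ((Real.sqrt ((S j).card) : ℂ) * ip (ψ j) (φ0 j))‖ ≤
      Real.sqrt ω * CΞ * ∑ v, ‖f v‖ :=
  stmt9_general w hsymm hnn S hdisj hconnS hcardS ψ hsupp φ0 hφ0 hnz lam1 hlam CΞ hC ω f hf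
end
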